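/- arXiv:1802.06937 — 8 statements merged into one kernel-verified Lean document; each statement's English description precedes it below -/
import Mathlib

section
/- Let r_c = exp(-π/√3). For every real r with 0 < r < r_c there exists a unique β in the open interval (0, 1/6) satisfying the transcendental equation -3β·log(r) + log(2·sin(π(1/6 - β))) = 0. -/
/-!
With `a = -3 log r`, the function `F β = a β + log (2 sin (π (1/6 - β)))` vanishes at `β = 0`,
is strictly concave where the sine is positive, and tends to `-∞` as `β → 1/6⁻`.
Since `F' 0 = a - √3 π`, the condition `r < exp (-π/√3)` says exactly that `F` increases at `0`;
so `F` is positive just to the right of `0` and has a zero in `(0, 1/6)` by the intermediate value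
theorem; by strict concavity, `F` takes the value `F 0 = 0` at no more than one point besides `0`.
-/

open Real Set Filter Topology

theorem StrictConcaveOn.comp_mul_add {f : ℝ → ℝ} {t : Set ℝ} (hf : StrictConcaveOn ℝ t f)
    {a : ℝ} (ha : a ≠ 0) (b : ℝ) :
    StrictConcaveOn ℝ ((fun x => a * x + b) ⁻¹' t) (fun x => f (a * x + b)) := by
  have hline : ⇑(AffineMap.lineMap b (a + b) : ℝ →ᵃ[ℝ] ℝ) = fun x => a * x + b := by
    ext x; simp only [AffineMap.lineMap_apply_ring']; ring
  refine ⟨hline ▸ hf.1.affine_preimage _, fun x hx y hy hxy p q hp hq hpq => ?_⟩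
  have hmix : a * (p • x + q • y) + b = p • (a * x + b) + q • (a * y + b) := by
    simp only [smul_eq_mul]; linear_combination b * hpq.symm
  show _ < f _
  rw [hmix]
  exact hf.2 hx hy (fun h => hxy (mul_left_cancel₀ ha (add_right_cancel h))) hp hq hpq

theorem StrictConcaveOn.eq_of_apply_eq_apply {𝕜 : Type*} [Field 𝕜] [LinearOrder 𝕜]
    [IsStrictOrderedRing 𝕜] {s : Set 𝕜} {f : 𝕜 → 𝕜} (hf : StrictConcaveOn 𝕜 s f) {a x y : 𝕜}
    (ha : a ∈ s) (hx : x ∈ s) (hy : y ∈ s) (hxa : x ≠ a) (hya : y ≠ a)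
    (hfx : f x = f a) (hfy : f y = f a) : x = y := by
  by_contra hxy
  rcases lt_or_gt_of_ne hxy with hlt | hlt
  · have := hf.secant_strict_mono ha hx hy hxa hya hlt
    simp [hfx, hfy] at this
  · have := hf.secant_strict_mono ha hy hx hya hxa hlt
    simp [hfx, hfy] at this

theorem HasDerivAt.eventually_lt_of_pos {f : ℝ → ℝ} {f' a : ℝ} (hf : HasDerivAt f f' a)
    (hf' : 0 < f') : ∀ᶠ x in 𝓝[>] a, f a < f x := by
  have hslope := (hasDerivAt_iff_tendsto_slope.1 hf).mono_left (nhdsGT_le_nhdsNE a)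
  filter_upwards [hslope.eventually (eventually_gt_nhds hf'), self_mem_nhdsWithin] with x hpos hx
  rw [slope_def_field] at hpos
  exact sub_pos.1 ((div_pos_iff_of_pos_right (sub_pos.2 hx)).1 hpos)

theorem strictConcaveOn_log_two_mul_sin :
    StrictConcaveOn ℝ (Ioo 0 π) fun θ => log (2 * sin θ) := by
  refine ⟨convex_Ioo 0 π, fun x hx y hy hxy p q hp hq hpq => ?_⟩
  have hsx : 0 < 2 * sin x := by have := sin_pos_of_pos_of_lt_pi hx.1 hx.2; positivity
  have hsy : 0 < 2 * sin y := by have := sin_pos_of_pos_of_lt_pi hy.1 hy.2; positivity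
  have hsin := strictConcaveOn_sin_Icc.2 (Ioo_subset_Icc_self hx) (Ioo_subset_Icc_self hy) hxy
    hp hq hpq
  have hlog := strictConcaveOn_log_Ioi.concaveOn.2 hsx hsy hp.le hq.le hpq
  simp only [smul_eq_mul] at hsin hlog ⊢
  calc p * log (2 * sin x) + q * log (2 * sin y)
      ≤ log (p * (2 * sin x) + q * (2 * sin y)) := hlog
    _ < log (2 * sin (p * x + q * y)) := log_lt_log (by positivity) (by linarith)

theorem sin_pi_mul_one_sixth_sub_pos {β : ℝ} (hβ : β ∈ Ioo (-5/6 : ℝ) (1/6)) :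
    0 < sin (π * (1/6 - β)) :=
  sin_pos_of_pos_of_lt_pi (by nlinarith [pi_pos, hβ.2]) (by nlinarith [pi_pos, hβ.1])

section

variable (r : ℝ)

noncomputable def betaFun (β : ℝ) : ℝ :=
  -3 * β * log r + log (2 * sin (π * (1/6 - β)))

theorem betaFun_zero : betaFun r 0 = 0 := by
  simp only [betaFun, mul_zero, zero_mul, sub_zero, mul_one_div, sin_pi_div_six]
  norm_num

theorem strictConcaveOn_betaFun :
    StrictConcaveOn ℝ (Ioo (-5/6 : ℝ) (1/6)) (betaFun r) := by
  have hdom : Ioo (-5/6 : ℝ) (1/6) ⊆ (fun β => -π * β + π / 6) ⁻¹' Ioo 0 π := fun β hβ =>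
    ⟨by nlinarith [pi_pos, hβ.2], by nlinarith [pi_pos, hβ.1]⟩
  have hlogsin := (strictConcaveOn_log_two_mul_sin.comp_mul_add (neg_ne_zero.2 pi_ne_zero)
    (π / 6)).subset hdom (convex_Ioo _ _)
  have hsplit : betaFun r =
      (fun β => log (2 * sin (-π * β + π / 6))) + LinearMap.mulLeft ℝ (-3 * log r) := by
    ext β
    simp only [betaFun, Pi.add_apply, LinearMap.mulLeft_apply]
    ring_nf
  rw [hsplit]
  exact hlogsin.add_concaveOn ((LinearMap.mulLeft ℝ (-3 * log r)).concaveOn (convex_Ioo _ _))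

theorem continuousOn_betaFun : ContinuousOn (betaFun r) (Ioo (-5/6 : ℝ) (1/6)) := by
  refine ContinuousOn.add (by fun_prop) (ContinuousOn.log (by fun_prop) fun β hβ => ?_)
  exact (mul_pos two_pos (sin_pi_mul_one_sixth_sub_pos hβ)).ne'

theorem hasDerivAt_betaFun_zero :
    HasDerivAt (betaFun r) (-3 * log r - √3 * π) 0 := by
  have harg : π * (1/6 - 0) = π / 6 := by ring
  have hsin := ((((hasDerivAt_id' 0).const_sub (1/6)).const_mul π).sin).const_mul 2
  have hlog := hsin.log (by rw [harg, sin_pi_div_six]; norm_num)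
  have hlin := ((hasDerivAt_id' 0).const_mul (-3)).mul_const (log r)
  refine (hlin.add hlog).congr_deriv ?_
  rw [harg, sin_pi_div_six, cos_pi_div_six]
  ring

theorem tendsto_betaFun_nhdsLT_one_sixth :
    Tendsto (betaFun r) (𝓝[<] (1/6)) atBot := by
  have hsin : Tendsto (fun β => 2 * sin (π * (1/6 - β))) (𝓝[<] (1/6)) (𝓝[>] 0) := by
    refine tendsto_nhdsWithin_iff.2 ⟨?_, ?_⟩
    · have : Continuous fun β : ℝ => 2 * sin (π * (1/6 - β)) := by fun_prop
      simpa using (this.tendsto (1/6)).mono_left nhdsWithin_le_nhds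
    · filter_upwards [Ioo_mem_nhdsLT (show (-5/6 : ℝ) < 1/6 by norm_num)] with β hβ
      exact mul_pos two_pos (sin_pi_mul_one_sixth_sub_pos hβ)
  have hlin : Tendsto (fun β : ℝ => -3 * β * log r) (𝓝[<] (1/6)) (𝓝 (-3 * (1/6) * log r)) :=
    ((continuous_id.const_mul (-3)).mul_const (log r)).tendsto _ |>.mono_left nhdsWithin_le_nhds
  exact hlin.add_atBot (tendsto_log_nhdsGT_zero.comp hsin)

theorem betaFun_eq_zero_unique {β γ : ℝ} (hβ : β ∈ Ioo (0 : ℝ) (1/6))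
    (hγ : γ ∈ Ioo (0 : ℝ) (1/6)) (hβ0 : betaFun r β = 0) (hγ0 : betaFun r γ = 0) : β = γ := by
  have hsub : Ioo (0 : ℝ) (1/6) ⊆ Ioo (-5/6) (1/6) := Ioo_subset_Ioo_left (by norm_num)
  exact (strictConcaveOn_betaFun r).eq_of_apply_eq_apply (a := 0) (by norm_num) (hsub hβ)
    (hsub hγ) hβ.1.ne' hγ.1.ne' (hβ0.trans (betaFun_zero r).symm)
    (hγ0.trans (betaFun_zero r).symm)

theorem exists_betaFun_eq_zero (hslope : √3 * π < -3 * log r) :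
    ∃ β ∈ Ioo (0 : ℝ) (1/6), betaFun r β = 0 := by
  obtain ⟨z, hz, hzI⟩ := (((hasDerivAt_betaFun_zero r).eventually_lt_of_pos
    (sub_pos.2 hslope)).and (Ioo_mem_nhdsGT (show (0 : ℝ) < 1/6 by norm_num))).exists
  rw [betaFun_zero] at hz
  have hIco : Ico z (1/6) ⊆ Ioo (0 : ℝ) (1/6) := Ico_subset_Ioo_left hzI.1
  obtain ⟨β, hβ, hβ0⟩ := isPreconnected_Ico.intermediate_value_Iio
    (le_principal_iff.2 (Ico_mem_nhdsLT hzI.2)) ((pure_le_principal z).2 ⟨le_rfl, hzI.2⟩)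
    ((continuousOn_betaFun r).mono (hIco.trans (Ioo_subset_Ioo_left (by norm_num))))
    (tendsto_betaFun_nhdsLT_one_sixth r) (tendsto_pure_nhds (betaFun r) z) hz
  exact ⟨β, hIco hβ, hβ0⟩

theorem sqrt_three_mul_pi_lt_neg_three_mul_log (hr0 : 0 < r)
    (hrc : r < exp (-π / √3)) : √3 * π < -3 * log r := by
  have hlog : log r < -π / √3 := (log_lt_iff_lt_exp hr0).2 hrc
  have h3 : 3 * (π / √3) = √3 * π := by rw [mul_div_left_comm, div_sqrt, mul_comm]
  linarith [neg_div √3 π]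

end

/-- For every `r` with `0 < r < r_c = exp(-π/√3)` there exists a unique
`β ∈ (0, 1/6)` satisfying `-3β·log r + log(2·sin(π(1/6 - β))) = 0`. -/
theorem exists_unique_beta_subcritical
    (r : ℝ) (hr0 : 0 < r) (hrc : r < Real.exp (-Real.pi / Real.sqrt 3)) :
    ∃! β : ℝ, β ∈ Set.Ioo (0 : ℝ) (1/6) ∧
      -3 * β * Real.log r + Real.log (2 * Real.sin (Real.pi * (1/6 - β))) = 0 := by
  obtain ⟨β, hβ, hβ0⟩ :=
    exists_betaFun_eq_zero r (sqrt_three_mul_pi_lt_neg_three_mul_log r hr0 hrc)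
  exact ⟨β, ⟨hβ, hβ0⟩, fun γ ⟨hγ, hγ0⟩ => betaFun_eq_zero_unique r hγ hβ hγ0 hβ0⟩
end

section
/- Let r_c = exp(-π/√3). For every real r with r > r_c there exists a unique β in the open interval (-5/6, 0) satisfying the transcendental equation -3β·log(r) + log(2·sin(π(1/6 - β))) = 0. Moreover, when r = 1 this unique solution is β = -2/3. -/
/-!
Write `N β = log (2 sin (π (1/6 - β)))` (`logTwoSin`), so that the equation reads `N β = 3 β log r`.
As the logarithm of a strictly concave positive function, `N` is strictly concave on
`(-5/6, 1/6)`, and `N 0 = 0`; hence the slope `N β / β` of the chord from the origin is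
strictly decreasing, which gives uniqueness, and `β = -2/3` is the root for `r = 1` because
`sin (5π/6) = 1/2`. For existence, the left side `-3 β log r + N β` tends to `-∞` as
`β → -5/6`, while near `0⁻` its sign is that of `3 log r - N'(0)` with `N'(0) = -√3 π`;
this is positive exactly when `r > exp (-π/√3)`.
-/

open Real Set Filter Topology

theorem StrictConcaveOn.log_comp {E : Type*} [AddCommGroup E] [Module ℝ E] {s : Set E}
    {f : E → ℝ} (hf : StrictConcaveOn ℝ s f) (hpos : ∀ x ∈ s, 0 < f x) :
    StrictConcaveOn ℝ s fun x => log (f x) := by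
  refine ⟨hf.1, fun x hx y hy hxy a b ha hb hab => ?_⟩
  have hcomb : 0 < a • f x + b • f y := by
    have := hpos x hx; have := hpos y hy; simp only [smul_eq_mul]; positivity
  calc a • log (f x) + b • log (f y) ≤ log (a • f x + b • f y) :=
        strictConcaveOn_log_Ioi.concaveOn.2 (hpos x hx) (hpos y hy) ha.le hb.le hab
    _ < log (f (a • x + b • y)) := log_lt_log hcomb (hf.2 hx hy hxy ha hb hab)

theorem StrictConcaveOn.strictAntiOn_slope {s : Set ℝ} {f : ℝ → ℝ} (hf : StrictConcaveOn ℝ s f)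
    {a : ℝ} (ha : a ∈ s) : StrictAntiOn (slope f a) (s \ {a}) := by
  intro x hx y hy hxy
  simpa only [slope_def_field] using hf.secant_strict_mono ha hx.1 hy.1 hx.2 hy.2 hxy

theorem exists_mem_Ioo_eq_zero_of_tendsto_atBot {f : ℝ → ℝ} {a b : ℝ} (hab : a < b)
    (hf : ContinuousOn f (Ioc a b)) (hbot : Tendsto f (𝓝[>] a) atBot) (hb : 0 < f b) :
    ∃ x ∈ Ioo a b, f x = 0 := by
  obtain ⟨a', hfa', ha'⟩ := ((hbot.eventually (eventually_lt_atBot 0)).and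
    (Ioo_mem_nhdsGT hab)).exists
  obtain ⟨x, hx, hfx⟩ := intermediate_value_Ioo ha'.2.le
    (hf.mono (Icc_subset_Ioc_iff ha'.2.le |>.2 ⟨ha'.1, le_rfl⟩)) ⟨hfa', hb⟩
  exact ⟨x, ⟨ha'.1.trans hx.1, hx.2⟩, hfx⟩

noncomputable def logTwoSin (β : ℝ) : ℝ := log (2 * sin (π * (1/6 - β)))

lemma two_sin_pos {β : ℝ} (hβ : β ∈ Ioo (-(5:ℝ)/6) (1/6)) : 0 < 2 * sin (π * (1/6 - β)) := by
  have := sin_pos_of_pos_of_lt_pi (x := π * (1/6 - β))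
    (by nlinarith [pi_pos, hβ.2]) (by nlinarith [pi_pos, hβ.1])
  positivity

lemma strictConcaveOn_two_sin :
    StrictConcaveOn ℝ (Ioo (-(5:ℝ)/6) (1/6)) fun β => 2 * sin (π * (1/6 - β)) := by
  have hθ : ∀ β ∈ Ioo (-(5:ℝ)/6) (1/6), π * (1/6 - β) ∈ Icc 0 π := fun β hβ =>
    ⟨by nlinarith [pi_pos, hβ.2], by nlinarith [pi_pos, hβ.1]⟩
  refine ⟨convex_Ioo _ _, fun x hx y hy hxy a b ha hb hab => ?_⟩
  have hsin := strictConcaveOn_sin_Icc.2 (hθ x hx) (hθ y hy)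
    (fun h => hxy (by nlinarith [pi_pos])) ha hb hab
  have hcomb : π * (1/6 - (a * x + b * y)) = a * (π * (1/6 - x)) + b * (π * (1/6 - y)) := by
    linear_combination (-π / 6) * hab
  simp only [smul_eq_mul] at hsin ⊢
  rw [hcomb]
  linarith

lemma strictConcaveOn_logTwoSin : StrictConcaveOn ℝ (Ioo (-(5:ℝ)/6) (1/6)) logTwoSin :=
  strictConcaveOn_two_sin.log_comp fun _ => two_sin_pos

lemma continuousOn_logTwoSin : ContinuousOn logTwoSin (Ioo (-(5:ℝ)/6) (1/6)) :=
  (Continuous.continuousOn (by fun_prop)).log fun _ hβ => (two_sin_pos hβ).ne'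

lemma logTwoSin_zero : logTwoSin 0 = 0 := by
  rw [logTwoSin, show π * (1/6 - 0) = π / 6 by ring, sin_pi_div_six]
  norm_num

lemma logTwoSin_neg_two_thirds : logTwoSin (-2/3) = 0 := by
  have h : π * (1/6 - -2/3) = π - π / 6 := by ring
  rw [logTwoSin, h, sin_pi_sub, sin_pi_div_six]
  norm_num

lemma hasDerivAt_logTwoSin_zero : HasDerivAt logTwoSin (-(√3 * π)) 0 := by
  have hθ := ((hasDerivAt_id (0:ℝ)).const_sub (1/6 : ℝ)).const_mul π
  have h := (((hasDerivAt_sin _).comp 0 hθ).const_mul 2).log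
    (two_sin_pos (by norm_num)).ne'
  refine h.congr_deriv ?_
  simp only [Function.comp_apply, id_eq, show π * (1/6 - 0) = π / 6 by ring, cos_pi_div_six,
    sin_pi_div_six]
  ring

lemma tendsto_logTwoSin_atBot : Tendsto logTwoSin (𝓝[>] (-(5:ℝ)/6)) atBot := by
  refine tendsto_log_nhdsGT_zero.comp (tendsto_nhdsWithin_iff.2 ⟨?_, ?_⟩)
  · have h : 2 * sin (π * (1/6 - (-(5:ℝ)/6))) = 0 := by
      rw [show π * (1/6 - (-(5:ℝ)/6)) = π by ring, sin_pi, mul_zero]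
    exact h ▸ (Continuous.tendsto (by fun_prop) _).mono_left nhdsWithin_le_nhds
  · filter_upwards [Ioo_mem_nhdsGT (by norm_num : -(5:ℝ)/6 < 1/6)] with β hβ
    exact two_sin_pos hβ

lemma root_iff_slope_eq {L β : ℝ} (hβ : β ≠ 0) :
    -3 * β * L + logTwoSin β = 0 ↔ slope logTwoSin 0 β = 3 * L := by
  rw [slope_def_field, logTwoSin_zero, sub_zero, sub_zero, div_eq_iff hβ]
  constructor <;> intro h <;> linarith

lemma root_unique {L β₁ β₂ : ℝ} (h₁ : β₁ ∈ Ioo (-(5:ℝ)/6) 0) (h₂ : β₂ ∈ Ioo (-(5:ℝ)/6) 0)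
    (e₁ : -3 * β₁ * L + logTwoSin β₁ = 0) (e₂ : -3 * β₂ * L + logTwoSin β₂ = 0) : β₁ = β₂ := by
  have hsub : Ioo (-(5:ℝ)/6) 0 ⊆ Ioo (-(5:ℝ)/6) (1/6) \ {0} := fun β hβ =>
    ⟨⟨hβ.1, hβ.2.trans (by norm_num)⟩, hβ.2.ne⟩
  refine (strictConcaveOn_logTwoSin.strictAntiOn_slope (by norm_num)).injOn
    (hsub h₁) (hsub h₂) ?_
  rw [(root_iff_slope_eq h₁.2.ne).1 e₁, (root_iff_slope_eq h₂.2.ne).1 e₂]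

lemma exists_root {L : ℝ} (hL : -(√3 * π) < 3 * L) :
    ∃ β ∈ Ioo (-(5:ℝ)/6) 0, -3 * β * L + logTwoSin β = 0 := by
  have hslope : Tendsto (slope logTwoSin 0) (𝓝[<] 0) (𝓝 (-(√3 * π))) :=
    (hasDerivAt_iff_tendsto_slope.1 hasDerivAt_logTwoSin_zero).mono_left
      (nhdsWithin_mono _ fun _ hx => ne_of_lt hx)
  obtain ⟨b, hb, hbmem⟩ := ((hslope.eventually_lt_const hL).and
    (Ioo_mem_nhdsLT (by norm_num : -(5:ℝ)/6 < 0))).exists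
  have hpos : 0 < -3 * b * L + logTwoSin b := by
    rw [slope_def_field, logTwoSin_zero, sub_zero, sub_zero, div_lt_iff_of_neg hbmem.2] at hb
    linarith
  have hcont : ContinuousOn (fun β => -3 * β * L + logTwoSin β) (Ioc (-(5:ℝ)/6) b) :=
    (Continuous.continuousOn (by fun_prop)).add
      (continuousOn_logTwoSin.mono fun β hβ => ⟨hβ.1, hβ.2.trans_lt (by linarith [hbmem.2])⟩)
  have hbot : Tendsto (fun β => -3 * β * L + logTwoSin β) (𝓝[>] (-(5:ℝ)/6)) atBot :=
    ((Continuous.tendsto (by fun_prop) _).mono_left nhdsWithin_le_nhds).add_atBot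
      tendsto_logTwoSin_atBot
  obtain ⟨β, hβ, hroot⟩ := exists_mem_Ioo_eq_zero_of_tendsto_atBot hbmem.1 hcont hbot hpos
  exact ⟨β, ⟨hβ.1, hβ.2.trans hbmem.2⟩, hroot⟩

lemma neg_sqrt_three_mul_pi_lt_three_log {r : ℝ} (hr : r > exp (-π / √3)) :
    -(√3 * π) < 3 * log r := by
  have hL : -π / √3 < log r := (lt_log_iff_exp_lt (lt_trans (exp_pos _) hr)).2 hr
  have h3 : 3 * (-π / √3) = -(√3 * π) := by
    field_simp
    rw [sq_sqrt (by norm_num)]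
  linarith

/-- For every `r > r_c = exp(-π/√3)` there exists a unique `β ∈ (-5/6, 0)`
satisfying `-3β·log r + log(2·sin(π(1/6 - β))) = 0`; moreover for `r = 1`
this unique solution is `β = -2/3`. -/
theorem exists_unique_beta_supercritical :
    (∀ r : ℝ, r > Real.exp (-Real.pi / Real.sqrt 3) →
      ∃! β : ℝ, β ∈ Set.Ioo (-(5:ℝ)/6) 0 ∧
        -3 * β * Real.log r + Real.log (2 * Real.sin (Real.pi * (1/6 - β))) = 0) ∧
    (∀ β : ℝ, β ∈ Set.Ioo (-(5:ℝ)/6) 0 →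
      -3 * β * Real.log 1 + Real.log (2 * Real.sin (Real.pi * (1/6 - β))) = 0 →
      β = -2/3) := by
  refine ⟨fun r hr => ?_, fun β hβ hroot => ?_⟩
  · obtain ⟨β, hβ, hroot⟩ := exists_root (neg_sqrt_three_mul_pi_lt_three_log hr)
    exact ⟨β, ⟨hβ, hroot⟩, fun γ hγ => root_unique hγ.1 hβ hγ.2 hroot⟩
  · refine root_unique hβ (by norm_num) hroot ?_
    rw [logTwoSin_neg_two_thirds, log_one]
    ring
end

section
/- Let r_c = exp(-π/√3) and let b : (0, r_c) → (0, 1/6) be any function such that for every r ∈ (0, r_c) one has -3·b(r)·log(r) + log(2·sin(π(1/6 - b(r)))) = 0. Then b(r) → 1/6 as r → 0⁺. -/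
open Filter Topology Real

/-! Put `t = 1 - 6β ∈ (0, 1)`. Concavity of `sin` on `[0, π]` gives `t ≤ 2 sin(πt/6)`, so the
equation yields `1 - 1/t ≤ log t ≤ 3β log r`. As `1 - 1/t = -6β/t`, dividing by `β > 0` leaves
`-2/t ≤ log r`, i.e. `0 < 1/6 - β ≤ -1/(3 log r)`, and the right-hand side tends to `0` as
`r → 0⁺`. -/

theorem mul_sin_le_sin_mul {t x : ℝ} (ht₀ : 0 ≤ t) (ht₁ : t ≤ 1) (hx₀ : 0 ≤ x) (hxπ : x ≤ π) :
    t * sin x ≤ sin (t * x) := by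
  simpa using strictConcaveOn_sin_Icc.concaveOn.2 ⟨le_rfl, pi_pos.le⟩ ⟨hx₀, hxπ⟩
    (sub_nonneg.2 ht₁) ht₀ (by ring)

theorem one_sub_six_mul_le_two_mul_sin {β : ℝ} (hβ₀ : 0 ≤ β) (hβ : β < 1 / 6) :
    1 - 6 * β ≤ 2 * sin (π * (1 / 6 - β)) := by
  have := mul_sin_le_sin_mul (t := 1 - 6 * β) (x := π / 6) (by linarith) (by linarith)
    (by positivity) (by linarith [pi_pos])
  rw [sin_pi_div_six, show (1 - 6 * β) * (π / 6) = π * (1 / 6 - β) by ring] at this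
  linarith

theorem one_sixth_add_inv_le_of_log_two_mul_sin_eq {β L : ℝ} (hβ₀ : 0 < β) (hβ : β < 1 / 6)
    (hL : L < 0) (h : -3 * β * L + log (2 * sin (π * (1 / 6 - β))) = 0) :
    1 / 6 + (3 * L)⁻¹ ≤ β := by
  set t := 1 - 6 * β with ht
  have ht₀ : 0 < t := by linarith
  have hlog : log t ≤ 3 * β * L := by
    have := log_le_log ht₀ (one_sub_six_mul_le_two_mul_sin hβ₀.le hβ)
    linarith
  have htL : -2 ≤ t * L := by
    have h₁ : (1 - t⁻¹) * t ≤ 3 * β * L * t :=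
      mul_le_mul_of_nonneg_right ((one_sub_inv_le_log_of_pos ht₀).trans hlog) ht₀.le
    rw [sub_mul, one_mul, inv_mul_cancel₀ ht₀.ne'] at h₁
    have h₂ : β * -2 ≤ β * (t * L) := by linarith
    exact le_of_mul_le_mul_left h₂ hβ₀
  have hdiff : β - (1 / 6 + (3 * L)⁻¹) = (t * L + 2) / -(6 * L) := by
    have hL₀ : L ≠ 0 := hL.ne
    field_simp
    ring
  linarith [div_nonneg (by linarith : 0 ≤ t * L + 2) (by linarith : 0 ≤ -(6 * L))]

/-- If `b` maps each `r ∈ (0, r_c)` (with `r_c = exp(-π/√3)`) into `(0, 1/6)`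
and satisfies `-3·b(r)·log r + log(2·sin(π(1/6 - b(r)))) = 0` there, then
`b(r) → 1/6` as `r → 0⁺`. -/
theorem beta_tendsto_one_sixth
    (b : ℝ → ℝ)
    (hb : ∀ r ∈ Set.Ioo (0 : ℝ) (Real.exp (-Real.pi / Real.sqrt 3)),
      b r ∈ Set.Ioo (0 : ℝ) (1/6) ∧
      -3 * b r * Real.log r + Real.log (2 * Real.sin (Real.pi * (1/6 - b r))) = 0) :
    Tendsto b (𝓝[>] (0 : ℝ)) (𝓝 (1/6)) := by
  have hmem : Set.Ioo 0 (exp (-π / √3)) ∈ 𝓝[>] (0 : ℝ) := Ioo_mem_nhdsGT (exp_pos _)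
  have hlower : Tendsto (fun r => 1 / 6 + (3 * log r)⁻¹) (𝓝[>] 0) (𝓝 (1 / 6)) := by
    simpa using (tendsto_inv_atBot_zero.comp
      (tendsto_log_nhdsGT_zero.const_mul_atBot three_pos)).const_add (1 / 6 : ℝ)
  refine tendsto_of_tendsto_of_tendsto_of_le_of_le' hlower tendsto_const_nhds ?_ ?_
  · filter_upwards [hmem] with r hr
    obtain ⟨⟨hb₀, hb₁⟩, heq⟩ := hb r hr
    have hrc : exp (-π / √3) < 1 :=
      exp_lt_one_iff.2 (div_neg_of_neg_of_pos (neg_neg_of_pos pi_pos) (by positivity))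
    exact one_sixth_add_inv_le_of_log_two_mul_sin_eq hb₀ hb₁ (log_neg hr.1 (hr.2.trans hrc)) heq
  · filter_upwards [hmem] with r hr using (hb r hr).1.2.le
end

section
/- Let r_c = exp(-π/√3) and let b : (r_c, ∞) → (-5/6, 0) be any function such that for every r > r_c one has -3·b(r)·log(r) + log(2·sin(π(1/6 - b(r)))) = 0. Then b(r) → -5/6 as r → ∞. -/
open Filter Topology

private lemma sin_gt_half_aux {x : ℝ} (h1 : 1/6 < x) (h2 : x < 5/6) :
    1/2 < Real.sin (Real.pi * x) := by
  have hpi := Real.pi_pos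
  rcases le_or_gt x (1/2) with h | h
  · have := Real.sin_lt_sin_of_lt_of_le_pi_div_two
      (x := Real.pi/6) (y := Real.pi * x) (by linarith) (by nlinarith) (by nlinarith)
    rw [Real.sin_pi_div_six] at this
    linarith
  · rw [← Real.sin_pi_sub]
    have := Real.sin_lt_sin_of_lt_of_le_pi_div_two
      (x := Real.pi/6) (y := Real.pi - Real.pi * x) (by linarith) (by nlinarith) (by nlinarith)
    rw [Real.sin_pi_div_six] at this
    linarith

private lemma sin_anti_aux {x y : ℝ} (hx : 1/2 ≤ x) (hxy : x ≤ y) (hy : y < 1) :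
    Real.sin (Real.pi * y) ≤ Real.sin (Real.pi * x) := by
  have hpi := Real.pi_pos
  rw [← Real.sin_pi_sub, ← Real.sin_pi_sub (Real.pi * x)]
  apply Real.sin_le_sin_of_le_of_le_pi_div_two
  · nlinarith
  · nlinarith
  · nlinarith

/-- If `b` maps each `r > r_c = exp(-π/√3)` into `(-5/6, 0)` and satisfies
`-3·b(r)·log r + log(2·sin(π(1/6 - b(r)))) = 0` there, then `b(r) → -5/6`
as `r → ∞`. -/
theorem beta_tendsto_neg_five_sixth
    (b : ℝ → ℝ)
    (hb : ∀ r : ℝ, r > Real.exp (-Real.pi / Real.sqrt 3) →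
      b r ∈ Set.Ioo (-(5:ℝ)/6) 0 ∧
      -3 * b r * Real.log r + Real.log (2 * Real.sin (Real.pi * (1/6 - b r))) = 0) :
    Tendsto b atTop (𝓝 (-(5:ℝ)/6)) := by
  have hpi := Real.pi_pos
  rw [tendsto_order]
  constructor
  · intro a ha
    filter_upwards [eventually_gt_atTop (Real.exp (-Real.pi / Real.sqrt 3))] with r hr
    exact lt_trans ha (hb r hr).1.1
  · intro a ha
    rcases le_or_gt 0 a with h0 | h0
    · filter_upwards [eventually_gt_atTop (Real.exp (-Real.pi / Real.sqrt 3))] with r hr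
      exact lt_of_lt_of_le (hb r hr).1.2 h0
    · set c := 2 * Real.sin (Real.pi * (1/6 - a)) with hc
      have hsa : 0 < Real.sin (Real.pi * (1/6 - a)) := by
        apply Real.sin_pos_of_pos_of_lt_pi
        · nlinarith
        · nlinarith
      have hc0 : 0 < c := by positivity
      filter_upwards [eventually_gt_atTop (Real.exp (-Real.pi / Real.sqrt 3)),
        eventually_gt_atTop (Real.exp (-(Real.log c)/2)), eventually_gt_atTop 1]
        with r hr1 hr2 hr3
      by_contra hab
      push_neg at hab
      obtain ⟨⟨hb1, hb2⟩, heq⟩ := hb r hr1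
      have hlogr : 0 < Real.log r := Real.log_pos hr3
      have heq' : Real.log (2 * Real.sin (Real.pi * (1/6 - b r))) = 3 * b r * Real.log r := by
        linarith
      rcases le_or_gt (b r) (-2/3) with hcase | hcase
      · -- b r ≤ -2/3, hence a ≤ b r ≤ -2/3
        have hsin : Real.sin (Real.pi * (1/6 - a)) ≤ Real.sin (Real.pi * (1/6 - b r)) :=
          sin_anti_aux (by linarith) (by linarith) (by linarith)
        have hlog : Real.log c ≤ Real.log (2 * Real.sin (Real.pi * (1/6 - b r))) := by
          apply Real.log_le_log hc0
          linarith
        have hlr2 : -(Real.log c)/2 < Real.log r :=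
          (Real.lt_log_iff_exp_lt (by linarith)).mpr hr2
        nlinarith
      · -- -2/3 < b r < 0
        have hsin : 1/2 < Real.sin (Real.pi * (1/6 - b r)) :=
          sin_gt_half_aux (by linarith) (by linarith)
        have hlog : 0 < Real.log (2 * Real.sin (Real.pi * (1/6 - b r))) :=
          Real.log_pos (by linarith)
        nlinarith
end

section
/- Let β ∈ ℝ and let Φ : ℝ → ℝ be twice continuously differentiable and satisfy the Kummer-type equation y·Φ''(y) + (2/3 - y)·Φ'(y) + β·Φ(y) = 0 for all y ∈ ℝ. Define F(x,v) = x^β · Φ(v³/(9x)) for x > 0 and v ∈ ℝ. Then F satisfies the stationary kinetic equation v·∂ₓF(x,v) + ∂ᵥᵥF(x,v) = 0 for all x > 0 and v ∈ ℝ. -/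
/-!
With `y = v³/(9x)` and `F = x^β Φ(y)` one computes
`∂ₓF = x^(β-1) (β Φ(y) - y Φ'(y))` and `∂ᵥᵥF = x^(β-1) v (y Φ''(y) + (2/3) Φ'(y))`,
so `v ∂ₓF + ∂ᵥᵥF = x^(β-1) v (y Φ'' + (2/3 - y) Φ' + β Φ)(y)`, which vanishes by the
Kummer equation.
-/

open Real

theorem hasDerivAt_rpow_mul_comp_div {Φ : ℝ → ℝ} {β a x : ℝ} (hx : x ≠ 0)
    (hΦ : DifferentiableAt ℝ Φ (a / x)) :
    HasDerivAt (fun t => t ^ β * Φ (a / t))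
      (x ^ (β - 1) * (β * Φ (a / x) - a / x * deriv Φ (a / x))) x := by
  have hdiv : HasDerivAt (fun t => a / t) (-(a / x ^ 2)) x := by
    simpa [div_eq_mul_inv] using (hasDerivAt_inv hx).const_mul a
  have hcomp : HasDerivAt (fun t => Φ (a / t)) (deriv Φ (a / x) * -(a / x ^ 2)) x :=
    hΦ.hasDerivAt.comp x hdiv
  refine ((hasDerivAt_rpow_const (p := β) (Or.inl hx)).mul hcomp).congr_deriv ?_
  rw [rpow_sub_one hx]
  field_simp
  ring

theorem hasDerivAt_cube_div (c w : ℝ) : HasDerivAt (fun v => v ^ 3 / c) (3 * w ^ 2 / c) w := by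
  simpa using (hasDerivAt_pow 3 w).div_const c

theorem deriv_comp_cube_div {Φ : ℝ → ℝ} (c : ℝ) (hΦ : Differentiable ℝ Φ) :
    deriv (fun v => Φ (v ^ 3 / c)) = fun w => 3 * w ^ 2 / c * deriv Φ (w ^ 3 / c) := by
  funext w
  have h : HasDerivAt (fun v => Φ (v ^ 3 / c)) (deriv Φ (w ^ 3 / c) * (3 * w ^ 2 / c)) w :=
    (hΦ _).hasDerivAt.comp w (hasDerivAt_cube_div c w)
  rw [h.deriv, mul_comm]

theorem iteratedDeriv_two_comp_cube_div {Φ : ℝ → ℝ} {c : ℝ} (v : ℝ)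
    (hΦ : Differentiable ℝ Φ) (hΦ' : DifferentiableAt ℝ (deriv Φ) (v ^ 3 / c)) :
    iteratedDeriv 2 (fun w => Φ (w ^ 3 / c)) v =
      (3 * v ^ 2 / c) ^ 2 * iteratedDeriv 2 Φ (v ^ 3 / c) + 6 * v / c * deriv Φ (v ^ 3 / c) := by
  have hsq : HasDerivAt (fun w => 3 * w ^ 2 / c) (6 * v / c) v := by
    refine (((hasDerivAt_pow 2 v).const_mul 3).div_const c).congr_deriv ?_
    push_cast
    ring
  have hΦ'v : HasDerivAt (fun w => deriv Φ (w ^ 3 / c))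
      (iteratedDeriv 2 Φ (v ^ 3 / c) * (3 * v ^ 2 / c)) v := by
    rw [iteratedDeriv_succ, iteratedDeriv_one]
    exact hΦ'.hasDerivAt.comp v (hasDerivAt_cube_div c v)
  rw [iteratedDeriv_succ, iteratedDeriv_one, deriv_comp_cube_div c hΦ]
  exact (hsq.mul hΦ'v).deriv.trans (by ring)

/-- If `Φ` is `C²` and satisfies the Kummer-type equation
`y·Φ'' + (2/3 - y)·Φ' + β·Φ = 0` on `ℝ`, then `F(x,v) = x^β·Φ(v³/(9x))`
satisfies the stationary kinetic equation `v·∂ₓF + ∂ᵥᵥF = 0` for `x > 0`. -/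
theorem selfSimilar_solves_stationary_kineticFP
    (β : ℝ) (Φ : ℝ → ℝ) (hΦ : ContDiff ℝ 2 Φ)
    (hode : ∀ y : ℝ,
      y * iteratedDeriv 2 Φ y + (2/3 - y) * deriv Φ y + β * Φ y = 0)
    (F : ℝ → ℝ → ℝ)
    (hF : ∀ x v : ℝ, F x v = x ^ β * Φ (v ^ 3 / (9 * x))) :
    ∀ x : ℝ, 0 < x → ∀ v : ℝ,
      v * deriv (fun x' => F x' v) x + iteratedDeriv 2 (fun v' => F x v') v = 0 := by
  intro x hx v
  have hΦ₁ : Differentiable ℝ Φ := hΦ.differentiable two_ne_zero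
  have hΦ₂ : Differentiable ℝ (deriv Φ) := by
    simpa using hΦ.differentiable_iteratedDeriv 1 (by norm_num)
  have hFx : (fun x' => F x' v) = fun x' => x' ^ β * Φ (v ^ 3 / 9 / x') := by
    simp only [hF, div_div]
  have hFv : (fun v' => F x v') = fun v' => x ^ β * Φ (v' ^ 3 / (9 * x)) := funext (hF x)
  rw [hFx, (hasDerivAt_rpow_mul_comp_div hx.ne' (hΦ₁ _)).deriv, hFv,
    iteratedDeriv_const_mul_field, iteratedDeriv_two_comp_cube_div v hΦ₁ (hΦ₂ _), div_div,
    rpow_sub_one hx.ne']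
  linear_combination v * x ^ β / x * hode (v ^ 3 / (9 * x))
end

section
/- For every ζ ∈ (0, 1/6) the following strict inequality holds: -(4π/3)·sin(πζ) - 2·cos(π(ζ + 1/3))·[ log(2·cos(π(ζ + 1/3)))/(3ζ) + √3·π/3 ] < 0. -/
/-!
Put `θ = π (ζ + 1/3) ∈ (π/3, π/2)`. Expanding `sin (π ζ) = sin (θ - π/3)`, the expression equals
`-2 ((θ - π/3) sin θ + cos θ · log (2 cos θ)) / (3 ζ)`. The bracket is positive because
`log ∘ cos` is strictly concave on `(-π/2, π/2)` with derivative `-tan`, so at `π/3`, where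
`log (2 cos (π/3)) = 0`, it lies strictly below its tangent line at `θ`.
-/

open Real Set

lemma hasDerivAt_log_cos {x : ℝ} (hx : cos x ≠ 0) :
    HasDerivAt (fun y => log (cos y)) (-tan x) x := by
  simpa [tan_eq_sin_div_cos, neg_div] using (hasDerivAt_cos x).log hx

lemma strictConcaveOn_log_cos :
    StrictConcaveOn ℝ (Ioo (-(π / 2)) (π / 2)) (fun x => log (cos x)) := by
  have hderiv : ∀ x ∈ Ioo (-(π / 2)) (π / 2), deriv (fun y => log (cos y)) x = -tan x :=
    fun x hx => (hasDerivAt_log_cos (cos_pos_of_mem_Ioo hx).ne').deriv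
  refine StrictAntiOn.strictConcaveOn_of_deriv (convex_Ioo _ _) (fun x hx =>
    (hasDerivAt_log_cos (cos_pos_of_mem_Ioo hx).ne').continuousAt.continuousWithinAt) ?_
  rw [interior_Ioo]
  intro x hx y hy hxy
  rw [hderiv x hx, hderiv y hy, neg_lt_neg_iff]
  exact strictMonoOn_tan hx hy hxy

lemma mul_sin_add_cos_mul_log_pos {θ : ℝ} (h₁ : π / 3 < θ) (h₂ : θ < π / 2) :
    0 < (θ - π / 3) * sin θ + cos θ * log (2 * cos θ) := by
  have hcos : 0 < cos θ := cos_pos_of_mem_Ioo ⟨by linarith [pi_pos], h₂⟩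
  have hslope := strictConcaveOn_log_cos.lt_slope_of_hasDerivAt
    (⟨by linarith [pi_pos], by linarith [pi_pos]⟩ : π / 3 ∈ Ioo (-(π / 2)) (π / 2))
    ⟨by linarith [pi_pos], h₂⟩ h₁ (hasDerivAt_log_cos hcos.ne')
  have htangent : -((θ - π / 3) * tan θ) < log (2 * cos θ) := by
    rw [slope_def_field, cos_pi_div_three, lt_div_iff₀ (by linarith)] at hslope
    have hlog_half : log (1 / 2 : ℝ) = -log 2 := by rw [one_div, log_inv]
    rw [log_mul two_ne_zero hcos.ne']
    linarith
  have hsin : cos θ * -((θ - π / 3) * tan θ) = -((θ - π / 3) * sin θ) := by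
    rw [← tan_mul_cos hcos.ne']; ring
  linarith [mul_lt_mul_of_pos_left htangent hcos]

/-- For every `ζ ∈ (0, 1/6)`:
`-(4π/3)·sin(πζ) - 2·cos(π(ζ+1/3))·[log(2·cos(π(ζ+1/3)))/(3ζ) + √3·π/3] < 0`. -/
theorem flux_constant_expression_neg
    (ζ : ℝ) (hζ : ζ ∈ Set.Ioo (0 : ℝ) (1/6)) :
    -(4 * Real.pi / 3) * Real.sin (Real.pi * ζ) -
      2 * Real.cos (Real.pi * (ζ + 1/3)) *
        (Real.log (2 * Real.cos (Real.pi * (ζ + 1/3))) / (3 * ζ) +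
          Real.sqrt 3 * Real.pi / 3) < 0 := by
  obtain ⟨hζ₀, hζ₆⟩ := hζ
  set θ := π * (ζ + 1 / 3) with hθ
  have hsin : sin (π * ζ) = sin θ / 2 - √3 / 2 * cos θ := by
    rw [show π * ζ = θ - π / 3 by ring, sin_sub, cos_pi_div_three, sin_pi_div_three]
    ring
  have hexpr : -(4 * π / 3) * sin (π * ζ) - 2 * cos θ * (log (2 * cos θ) / (3 * ζ) + √3 * π / 3)
      = -(2 * ((θ - π / 3) * sin θ + cos θ * log (2 * cos θ))) / (3 * ζ) := by
    rw [hsin]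
    field_simp
    ring
  have hbracket := mul_sin_add_cos_mul_log_pos (θ := θ) (by nlinarith [pi_pos, hθ])
    (by nlinarith [pi_pos, hθ])
  rw [hexpr]
  exact div_neg_of_neg_of_pos (by linarith) (by positivity)
end

section
/- Let r_c = exp(-π/√3) and let 0 < r < r_c. Let β ∈ (0, 1/6) satisfy -3β·log(r) + log(2·sin(π(1/6 - β))) = 0, and set α = -β - 2/3. Then (π/3)·(sin(πα) + √3·cos(πα)) - 2·cos(π(β + 1/3))·log(r) < 0. -/
/-!
With `t = π(β + 1/3) ∈ (π/3, π/2)` the defining equation of `β` reads `log (2 cos t) = 3β log r`,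
and the flux constant equals `-(2/3)(π sin t + 3 cos t log r)`. Multiplying by `β > 0`, its sign is
that of `-(g t)`, where `g t = (t - π/3) sin t + cos t log (2 cos t)`. Now `x log x ≥ x - 1` gives
`cos t log (2 cos t) ≥ cos t - cos (π/3)`, and strict concavity of `cos` on `[-π/2, π/2]` gives
`cos (π/3) - cos t < (t - π/3) sin t`, so `g t > 0`.
-/

open Real Set

namespace Real

lemma sin_add_sqrt_three_mul_cos (x : ℝ) : sin x + √3 * cos x = 2 * sin (x + π / 3) := by
  rw [sin_add, sin_pi_div_three, cos_pi_div_three]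
  ring

lemma cos_sub_cos_lt_mul_sin {a t : ℝ} (ha : -(π / 2) ≤ a) (hat : a < t) (ht : t ≤ π / 2) :
    cos a - cos t < (t - a) * sin t := by
  have hslope := strictConcaveOn_cos_Icc.lt_slope_of_hasDerivAt
    ⟨ha, hat.le.trans ht⟩ ⟨ha.trans hat.le, ht⟩ hat (hasDerivAt_cos t)
  rw [slope_def_field, lt_div_iff₀ (sub_pos.2 hat)] at hslope
  linarith

lemma cos_sub_half_le_cos_mul_log {t : ℝ} (hcos : 0 ≤ cos t) :
    cos t - 1 / 2 ≤ cos t * log (2 * cos t) := by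
  have h := self_sub_one_le_mul_log (by positivity : 0 ≤ 2 * cos t)
  linarith

lemma mul_sin_add_cos_mul_log_pos {t : ℝ} (h1 : π / 3 < t) (h2 : t ≤ π / 2) :
    0 < (t - π / 3) * sin t + cos t * log (2 * cos t) := by
  have hcos : 0 ≤ cos t := cos_nonneg_of_mem_Icc ⟨by linarith [pi_pos], h2⟩
  have hlt := cos_sub_cos_lt_mul_sin (by linarith [pi_pos]) h1 h2
  rw [cos_pi_div_three] at hlt
  linarith [cos_sub_half_le_cos_mul_log hcos]

end Real

theorem flux_constant_neg_subcritical_general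
    (r β α : ℝ)
    (hβ : β ∈ Set.Ioo (0 : ℝ) (1/6))
    (heq : -3 * β * Real.log r + Real.log (2 * Real.sin (Real.pi * (1/6 - β))) = 0)
    (hα : α = -β - 2/3) :
    (Real.pi / 3) * (Real.sin (Real.pi * α) + Real.sqrt 3 * Real.cos (Real.pi * α)) -
      2 * Real.cos (Real.pi * (β + 1/3)) * Real.log r < 0 := by
  obtain ⟨hβ0, hβ6⟩ := hβ
  set t := π * (β + 1 / 3) with ht
  have hsin : sin (π * (1 / 6 - β)) = cos t := by
    rw [← sin_pi_div_two_sub, ht]; ring_nf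
  have hcomb : sin (π * α) + √3 * cos (π * α) = -2 * sin t := by
    rw [sin_add_sqrt_three_mul_cos, show π * α + π / 3 = -t by rw [hα, ht]; ring, sin_neg]
    ring
  have hlog : log (2 * cos t) = 3 * β * log r := by rw [hsin] at heq; linarith
  have hg := mul_sin_add_cos_mul_log_pos (t := t) (by nlinarith [pi_pos]) (by nlinarith [pi_pos])
  rw [hlog, show t - π / 3 = β * π by ring] at hg
  have hpos : 0 < π * sin t + 3 * cos t * log r := by nlinarith
  rw [hcomb]
  linarith

/-- For subcritical `0 < r < r_c = exp(-π/√3)`, with `β ∈ (0,1/6)` the solution of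
`-3β·log r + log(2·sin(π(1/6-β))) = 0` and `α = -β - 2/3`, the flux constant
`C*/9^{2/3} = (π/3)(sin(πα) + √3·cos(πα)) - 2·cos(π(β+1/3))·log r` is negative. -/
theorem flux_constant_neg_subcritical
    (r β α : ℝ) (hr0 : 0 < r) (hrc : r < Real.exp (-Real.pi / Real.sqrt 3))
    (hβ : β ∈ Set.Ioo (0 : ℝ) (1/6))
    (heq : -3 * β * Real.log r + Real.log (2 * Real.sin (Real.pi * (1/6 - β))) = 0)
    (hα : α = -β - 2/3) :
    (Real.pi / 3) * (Real.sin (Real.pi * α) + Real.sqrt 3 * Real.cos (Real.pi * α)) -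
      2 * Real.cos (Real.pi * (β + 1/3)) * Real.log r < 0 :=
  flux_constant_neg_subcritical_general r β α hβ heq hα
end

section
/- For every ζ ∈ (0, 1/6): sin(πζ) + (2·cos(π(ζ + 1/3)) - 1)/(4πζ) + (√3/2)·cos(π(ζ + 1/3)) > 0. -/
open Real

/-- Strict concavity of `cos` on `[-π/2, π/2]`, compared with its tangent line at `y`. -/
theorem Real.cos_sub_cos_lt_mul_sin_s9 {x y : ℝ} (hx : -(π / 2) ≤ x) (hxy : x < y) (hy : y ≤ π / 2) :
    cos x - cos y < (y - x) * sin y := by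
  have hmem : ∀ {z}, -(π / 2) ≤ z → z ≤ π / 2 → z ∈ Set.Icc (-(π / 2)) (π / 2) :=
    fun h₁ h₂ => ⟨h₁, h₂⟩
  have htangent : -sin y < (cos y - cos x) / (y - x) := by
    simpa [slope_def_field] using
      strictConcaveOn_cos_Icc.lt_slope_of_hasDerivAt (hmem hx (by linarith))
        (hmem (by linarith) hy) hxy (hasDerivAt_cos y)
  have hpos : 0 < y - x := sub_pos.mpr hxy
  rw [lt_div_iff₀ hpos] at htangent
  linarith

/-- For every `ζ ∈ (0, 1/6)`:
`sin(πζ) + (2·cos(π(ζ+1/3)) - 1)/(4πζ) + (√3/2)·cos(π(ζ+1/3)) > 0`. -/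
theorem Phi_positive
    (ζ : ℝ) (hζ : ζ ∈ Set.Ioo (0 : ℝ) (1/6)) :
    Real.sin (Real.pi * ζ) +
      (2 * Real.cos (Real.pi * (ζ + 1/3)) - 1) / (4 * Real.pi * ζ) +
      (Real.sqrt 3 / 2) * Real.cos (Real.pi * (ζ + 1/3)) > 0 := by
  obtain ⟨hζ₀, hζ₁⟩ := hζ
  set B := π * (ζ + 1 / 3) with hB
  have hπζ : 0 < π * ζ := mul_pos pi_pos hζ₀
  have hsin : sin (π * ζ) = sin B / 2 - sqrt 3 / 2 * cos B := by
    rw [show π * ζ = B - π / 3 by rw [hB]; ring, sin_sub, cos_pi_div_three, sin_pi_div_three]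
    ring
  have hconcave : cos (π / 3) - cos B < (B - π / 3) * sin B :=
    cos_sub_cos_lt_mul_sin_s9 (by linarith [pi_pos]) (by rw [hB]; nlinarith [pi_pos])
      (by rw [hB]; nlinarith [pi_pos])
  rw [cos_pi_div_three, show B - π / 3 = π * ζ by rw [hB]; ring] at hconcave
  have hquot : -(sin B / 2) < (2 * cos B - 1) / (4 * π * ζ) := by
    rw [lt_div_iff₀ (by linarith)]
    linarith
  rw [hsin]
  linarith
end
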